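/- arXiv:2506.19580 — 4 statements merged into one kernel-verified Lean document; each statement's English description precedes it below -/
import Mathlib

section
/- Let q ≥ 2 and k ≥ 1 be integers, and let C = C_{2q+1} denote the cycle of length 2q+1. Then the k-clique blowup C^k of C satisfies χ(C^k) = ⌈((2q+1)/(2q))·ω(C^k)⌉; equivalently, since ω(C^k) = 2k, χ(C^k) = ⌈(2q+1)k/q⌉. -/
open SimpleGraph

/-- The `t`-clique blowup `H^t` of a graph `H`: each vertex `v` of `H` is replaced by a
clique of size `t`, cliques of adjacent vertices are complete to each other and cliques
of distinct nonadjacent vertices are anticomplete. -/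
def cliqueBlowupPow {α : Type} (H : SimpleGraph α) (t : ℕ) : SimpleGraph (α × Fin t) :=
  SimpleGraph.fromRel (fun x y => x.1 = y.1 ∨ H.Adj x.1 y.1)

/-!
A colour class of a proper colouring of `C^k` meets every blob at most once, so it projects to an
independent set of `C_{2q+1}`, which has at most `q` vertices (`S` and `S + 1` are disjoint);
hence `(2q+1)k ≤ qc` for every `c`-colouring. Conversely, if `(2q+1)k + E = qm` with `E < q`,
give blob `i` the `k` residues mod `m` starting at `ik + min i E`: consecutive starts differ by
`k` or `k + 1 ≤ m - k`, and the last block ends exactly `q` turns around the circle, right before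
the first one begins. A clique meets at most two blobs since `C_{2q+1}` is triangle-free, so
`ω(C^k) = 2k`.
-/

open Finset

namespace SimpleGraph

section CliqueBlowup

variable {α : Type} {H : SimpleGraph α} {t : ℕ}

lemma cliqueBlowupPow_adj {x y : α × Fin t} :
    (cliqueBlowupPow H t).Adj x y ↔ x ≠ y ∧ (x.1 = y.1 ∨ H.Adj x.1 y.1) := by
  simp only [cliqueBlowupPow, fromRel_adj, H.adj_comm y.1, eq_comm (a := y.1), or_self]

lemma IsClique.image_fst {S : Set (α × Fin t)} (hS : (cliqueBlowupPow H t).IsClique S) :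
    H.IsClique (Prod.fst '' S) := by
  rintro _ ⟨x, hx, rfl⟩ _ ⟨y, hy, rfl⟩ hne
  exact (cliqueBlowupPow_adj.1 (hS hx hy (ne_of_apply_ne _ hne))).2.resolve_left hne

lemma IsClique.prod_univ {T : Set α} (hT : H.IsClique T) :
    (cliqueBlowupPow H t).IsClique (T ×ˢ Set.univ) := by
  rintro x ⟨hx, -⟩ y ⟨hy, -⟩ hne
  exact cliqueBlowupPow_adj.2 ⟨hne, or_iff_not_imp_left.2 (hT hx hy)⟩

lemma cliqueNum_cliqueBlowupPow [Finite α] :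
    (cliqueBlowupPow H t).cliqueNum = t * H.cliqueNum := by
  classical
  have := Fintype.ofFinite α
  apply le_antisymm
  · obtain ⟨S, hS⟩ := (cliqueBlowupPow H t).exists_isNClique_cliqueNum
    have hfst : H.IsClique (S.image Prod.fst : Set α) := by
      simpa using hS.isClique.image_fst
    calc (cliqueBlowupPow H t).cliqueNum = #S := hS.card_eq.symm
      _ ≤ #(S.image Prod.fst) * #(S.image Prod.snd) :=
        (card_le_card subset_product).trans (card_product _ _).le
      _ ≤ H.cliqueNum * t :=
        Nat.mul_le_mul (hfst.card_le_cliqueNum) ((card_le_univ _).trans (by simp))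
      _ = t * H.cliqueNum := mul_comm _ _
  · obtain ⟨T, hT⟩ := H.exists_isNClique_cliqueNum
    have hclique : (cliqueBlowupPow H t).IsClique
        ((T ×ˢ (univ : Finset (Fin t)) : Finset _) : Set (α × Fin t)) := by
      simpa using hT.isClique.prod_univ (t := t)
    calc t * H.cliqueNum = #(T ×ˢ (univ : Finset (Fin t))) := by simp [hT.card_eq, mul_comm]
      _ ≤ (cliqueBlowupPow H t).cliqueNum := hclique.card_le_cliqueNum

lemma IsIndepSet.card_le_indepNum_of_cliqueBlowupPow [Finite α] {S : Finset (α × Fin t)}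
    (hS : (cliqueBlowupPow H t).IsIndepSet S) : #S ≤ H.indepNum := by
  classical
  have hinj : Set.InjOn Prod.fst (S : Set (α × Fin t)) := fun x hx y hy hxy =>
    by_contra fun hne => hS hx hy hne (cliqueBlowupPow_adj.2 ⟨hne, Or.inl hxy⟩)
  rw [← card_image_of_injOn hinj]
  refine IsIndepSet.card_le_indepNum ?_
  rw [coe_image]
  rintro _ ⟨x, hx, rfl⟩ _ ⟨y, hy, rfl⟩ hne hadj
  exact hS hx hy (ne_of_apply_ne _ hne) (cliqueBlowupPow_adj.2 ⟨ne_of_apply_ne _ hne, Or.inr hadj⟩)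

lemma Colorable.card_mul_le_indepNum_mul [Fintype α] {c : ℕ}
    (h : (cliqueBlowupPow H t).Colorable c) : Fintype.card α * t ≤ H.indepNum * c := by
  classical
  obtain ⟨C⟩ := h
  calc Fintype.card α * t = #(univ : Finset (α × Fin t)) := by simp
    _ ≤ H.indepNum * #(univ : Finset (Fin c)) :=
      card_le_mul_card_image_of_maps_to (fun _ _ => mem_univ _) _ fun b _ =>
        IsIndepSet.card_le_indepNum_of_cliqueBlowupPow
          (by simpa [Coloring.colorClass] using C.isIndepSet_colorClass b)
    _ = H.indepNum * c := by simp

lemma _root_.Nat.not_add_modEq_add_of_gap {m t d x y a b : ℕ} (hd : t ≤ d) (hdm : d + t ≤ m)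
    (ha : a < t) (hb : b < t) (h : x + d ≡ y [MOD m]) : ¬x + a ≡ y + b [MOD m] := fun h' => by
  have : x + a ≡ x + (d + b) [MOD m] := h'.trans (by rw [← add_assoc]; exact (h.add_right b).symm)
  have := (Nat.ModEq.add_left_cancel' x this).eq_of_lt_of_lt (by omega) (by omega)
  omega

lemma colorable_cliqueBlowupPow_of_offsets {m : ℕ} (htm : t ≤ m) (f : α → ℕ)
    (hf : ∀ u v, H.Adj u v → ∃ d, t ≤ d ∧ d + t ≤ m ∧
      (f u + d ≡ f v [MOD m] ∨ f v + d ≡ f u [MOD m])) :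
    (cliqueBlowupPow H t).Colorable m := by
  refine ⟨Coloring.mk (fun x => ⟨(f x.1 + x.2) % m, Nat.mod_lt _ (x.2.pos.trans_le htm)⟩) ?_⟩
  rintro ⟨u, a⟩ ⟨v, b⟩ hadj hcol
  have hmod : f u + a ≡ f v + b [MOD m] := Fin.mk.inj hcol
  obtain ⟨hne, rfl | huv⟩ := cliqueBlowupPow_adj.1 hadj
  · have := (Nat.ModEq.add_left_cancel' _ hmod).eq_of_lt_of_lt (by omega) (by omega)
    exact hne (Prod.ext rfl (Fin.ext this))
  · obtain ⟨d, hd, hdm, h | h⟩ := hf u v huv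
    · exact Nat.not_add_modEq_add_of_gap hd hdm a.2 b.2 h hmod
    · exact Nat.not_add_modEq_add_of_gap hd hdm b.2 a.2 h hmod.symm

end CliqueBlowup

section CycleGraph

lemma cycleGraph_adj_add_one {n : ℕ} (u : Fin (n + 2)) : (cycleGraph (n + 2)).Adj u (u + 1) :=
  cycleGraph_adj.2 (Or.inr (add_sub_cancel_left u 1))

lemma eq_add_one_or_eq_add_one_of_cycleGraph_adj {n : ℕ} {u v : Fin (n + 1)}
    (h : (cycleGraph (n + 1)).Adj u v) : v = u + 1 ∨ u = v + 1 := by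
  cases n with
  | zero => exact absurd h cycleGraph_one_adj
  | succ n => rw [cycleGraph_adj, sub_eq_iff_eq_add', sub_eq_iff_eq_add'] at h; exact h.symm

lemma IsIndepSet.two_mul_card_le_of_cycleGraph {n : ℕ} {S : Finset (Fin (n + 2))}
    (hS : (cycleGraph (n + 2)).IsIndepSet S) : 2 * #S ≤ n + 2 := by
  have hdisj : Disjoint S (S.map (Equiv.addRight 1).toEmbedding) := by
    refine Finset.disjoint_left.2 fun v hv hv' => ?_
    obtain ⟨u, hu, rfl⟩ := mem_map.1 hv'
    exact hS hu hv (cycleGraph_adj_add_one u).ne (cycleGraph_adj_add_one u)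
  simpa [two_mul] using (card_union_of_disjoint hdisj).symm.trans_le (card_le_univ _)

lemma two_mul_indepNum_cycleGraph_le (n : ℕ) : 2 * (cycleGraph (n + 2)).indepNum ≤ n + 2 := by
  obtain ⟨S, hS⟩ := (cycleGraph (n + 2)).exists_isNIndepSet_indepNum
  exact hS.card_eq ▸ hS.isIndepSet.two_mul_card_le_of_cycleGraph

lemma cycleGraph_cliqueFree_three (n : ℕ) : (cycleGraph (n + 4)).CliqueFree 3 := by
  intro S hS
  obtain ⟨a, b, c, hab, hac, hbc, rfl⟩ := card_eq_three.1 hS.card_eq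
  have h1 : (1 : Fin (n + 4)) ≠ 0 := by simp
  have h3 : (3 : Fin (n + 4)) ≠ 0 := by
    simp [Fin.ext_iff, Nat.mod_eq_of_lt (show 3 < n + 4 by omega)]
  have hadj {u v} (hu : u ∈ ({a, b, c} : Finset _)) (hv : v ∈ ({a, b, c} : Finset _))
      (huv : u ≠ v) := eq_add_one_or_eq_add_one_of_cycleGraph_adj (hS.isClique hu hv huv)
  have := hadj (by simp) (by simp) hab
  have := hadj (by simp) (by simp) hbc
  have := hadj (by simp) (by simp) hac
  -- going around the triangle adds up three steps `±1`, i.e. `±1` or `±3`, to get `0`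
  grind

lemma cliqueNum_cycleGraph (n : ℕ) : (cycleGraph (n + 4)).cliqueNum = 2 := by
  apply le_antisymm
  · obtain ⟨S, hS⟩ := (cycleGraph (n + 4)).exists_isNClique_cliqueNum
    by_contra! h
    exact (cycleGraph_cliqueFree_three n).mono h S hS
  · have : (cycleGraph (n + 4)).IsClique ({0, 1} : Finset (Fin (n + 4))) := by
      simp only [coe_insert, coe_singleton, isClique_pair]
      exact fun _ => cycleGraph_adj_add_one (n := n + 2) 0
    simpa using this.card_le_cliqueNum

lemma colorable_cliqueBlowupPow_cycleGraph {q k m : ℕ} (hlo : (2 * q + 1) * k ≤ q * m)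
    (hhi : q * m < (2 * q + 1) * k + q) :
    (cliqueBlowupPow (cycleGraph (2 * q + 1)) k).Colorable m := by
  obtain ⟨E, hE⟩ := Nat.exists_eq_add_of_le hlo
  have hEq : E < q := by omega
  have h2k : 2 * k ≤ m := Nat.le_of_mul_le_mul_left (by nlinarith) (by omega : 0 < q)
  have hgap : E = 0 ∨ 2 * k < m := by
    rcases Nat.eq_zero_or_pos E with hE0 | hE0
    exacts [Or.inl hE0, Or.inr (Nat.lt_of_mul_lt_mul_left (a := q) (by nlinarith))]
  set f : Fin (2 * q + 1) → ℕ := fun i => (i : ℕ) * k + min (i : ℕ) E with hf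
  have step (u : Fin (2 * q + 1)) : ∃ d, k ≤ d ∧ d + k ≤ m ∧ f u + d ≡ f (u + 1) [MOD m] := by
    by_cases hu : u = Fin.last (2 * q)
    · refine ⟨k, le_rfl, by omega, ?_⟩
      have : f u + k = q * m := by
        simp only [hf, hu, Fin.val_last, min_eq_right (by omega : E ≤ 2 * q)]
        rw [hE]; ring
      rw [this, hu, Fin.last_add_one]
      simpa [hf] using Nat.modEq_zero_iff_dvd.2 (dvd_mul_left m q)
    · have hval : ((u + 1 : Fin (2 * q + 1)) : ℕ) = u + 1 := by simp [Fin.val_add_one, hu]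
      refine ⟨k + (min ((u : ℕ) + 1) E - min (u : ℕ) E), by omega, ?_, ?_⟩
      · omega
      · simp only [hf, hval, add_one_mul]
        exact congrArg (· % m) (by omega)
  refine colorable_cliqueBlowupPow_of_offsets (by omega) f fun u v huv => ?_
  rcases eq_add_one_or_eq_add_one_of_cycleGraph_adj huv with rfl | rfl
  · obtain ⟨d, hd, hdm, h⟩ := step u
    exact ⟨d, hd, hdm, Or.inl h⟩
  · obtain ⟨d, hd, hdm, h⟩ := step v
    exact ⟨d, hd, hdm, Or.inr h⟩

lemma chromaticNumber_cliqueBlowupPow_cycleGraph {q : ℕ} (hq : 0 < q) (k : ℕ) :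
    (cliqueBlowupPow (cycleGraph (2 * q + 1)) k).chromaticNumber =
      ⌈(2 * q + 1 : ℚ) * k / q⌉₊ := by
  set m := ⌈(2 * q + 1 : ℚ) * k / q⌉₊
  have ceil_le_iff (c : ℕ) : m ≤ c ↔ (2 * q + 1) * k ≤ q * c := by
    rw [Nat.ceil_le, div_le_iff₀ (by positivity), ← Nat.cast_le (α := ℚ)]
    push_cast
    rw [mul_comm (c : ℚ)]
  have hlo := (ceil_le_iff m).1 le_rfl
  have hhi : q * m < (2 * q + 1) * k + q := by
    rcases Nat.eq_zero_or_pos m with h0 | hpos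
    · rw [h0, mul_zero]
      omega
    · have := mt (ceil_le_iff (m - 1)).2 (by omega)
      have := Nat.mul_sub_one q m
      have := Nat.le_mul_of_pos_right q hpos
      omega
  have hindep : (cycleGraph (2 * q + 1)).indepNum ≤ q := by
    obtain ⟨p, rfl⟩ : ∃ p, q = p + 1 := ⟨q - 1, by omega⟩
    have : 2 * (cycleGraph (2 * (p + 1) + 1)).indepNum ≤ 2 * p + 1 + 2 :=
      two_mul_indepNum_cycleGraph_le (2 * p + 1)
    omega
  refine le_antisymm (colorable_cliqueBlowupPow_cycleGraph hlo hhi).chromaticNumber_le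
    (le_chromaticNumber_iff_colorable.2 fun c hc => ?_)
  have := hc.card_mul_le_indepNum_mul.trans (Nat.mul_le_mul_right c hindep)
  exact_mod_cast (ceil_le_iff c).2 (by simpa using this)

end CycleGraph

end SimpleGraph

theorem chromatic_number_blowup_odd_cycle_general (q k : ℕ) (hq : 2 ≤ q) :
    (cliqueBlowupPow (cycleGraph (2 * q + 1)) k).cliqueNum = 2 * k ∧
    (cliqueBlowupPow (cycleGraph (2 * q + 1)) k).chromaticNumber =
      ((⌈((2 * q + 1 : ℚ)) / (2 * q) *
        ((cliqueBlowupPow (cycleGraph (2 * q + 1)) k).cliqueNum : ℚ)⌉₊ : ℕ) : ℕ∞) ∧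
    (cliqueBlowupPow (cycleGraph (2 * q + 1)) k).chromaticNumber =
      ((⌈((2 * q + 1 : ℚ)) * k / q⌉₊ : ℕ) : ℕ∞) := by
  have hω : (cliqueBlowupPow (cycleGraph (2 * q + 1)) k).cliqueNum = 2 * k := by
    obtain ⟨p, rfl⟩ := Nat.exists_eq_add_of_le' hq
    have : (cycleGraph (2 * (p + 2) + 1)).cliqueNum = 2 := cliqueNum_cycleGraph (2 * p + 1)
    rw [cliqueNum_cliqueBlowupPow, this, mul_comm]
  have hχ := chromaticNumber_cliqueBlowupPow_cycleGraph (by omega : 0 < q) k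
  refine ⟨hω, ?_, hχ⟩
  rw [hχ, hω]
  congr 3
  push_cast
  field_simp

/-- For integers `q ≥ 2` and `k ≥ 1`, the `k`-clique blowup `C^k` of the cycle
`C = C_{2q+1}` satisfies `ω(C^k) = 2k` and
`χ(C^k) = ⌈((2q+1)/(2q))·ω(C^k)⌉ = ⌈(2q+1)k/q⌉`. -/
theorem chromatic_number_blowup_odd_cycle (q k : ℕ) (hq : 2 ≤ q) (hk : 1 ≤ k) :
    (cliqueBlowupPow (cycleGraph (2 * q + 1)) k).cliqueNum = 2 * k ∧
    (cliqueBlowupPow (cycleGraph (2 * q + 1)) k).chromaticNumber =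
      ((⌈((2 * q + 1 : ℚ)) / (2 * q) *
        ((cliqueBlowupPow (cycleGraph (2 * q + 1)) k).cliqueNum : ℚ)⌉₊ : ℕ) : ℕ∞) ∧
    (cliqueBlowupPow (cycleGraph (2 * q + 1)) k).chromaticNumber =
      ((⌈((2 * q + 1 : ℚ)) * k / q⌉₊ : ℕ) : ℕ∞) :=
  chromatic_number_blowup_odd_cycle_general q k hq
end

section
/- Let q ≥ 2 be an integer and let C = C_{2q+1} denote the cycle of length 2q+1. Then every clique blowup G of C satisfies χ(G) ≤ ⌈((2q+1)/(2q))·ω(G)⌉. -/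
open SimpleGraph

/-- `G` is a clique blowup of `F` witnessed by the projection `f : β → α`: the fibers
`Q_v = f⁻¹(v)` are (possibly empty) cliques, `Q_u` is complete to `Q_v` when `uv ∈ E(F)`,
and `Q_u` is anticomplete to `Q_v` when `u ≠ v` and `uv ∉ E(F)`. -/
def IsCliqueBlowup {α β : Type} (F : SimpleGraph α) (G : SimpleGraph β) (f : β → α) : Prop :=
  ∀ x y : β, G.Adj x y ↔ (x ≠ y ∧ (f x = f y ∨ F.Adj (f x) (f y)))

/-!
Colour with the residues modulo `k = ⌈(2q+1)ω/(2q)⌉` and give the fibre `Q_v` an arc of `|Q_v|`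
consecutive residues, the arc of `Q_{v+1}` starting `|Q_v| + g_v` after that of `Q_v`. Fibres of
adjacent vertices form a clique, so `|Q_v| + |Q_{v+1}| ≤ ω ≤ k`, and any gap
`g_v ≤ k - |Q_v| - |Q_{v+1}|` keeps their arcs disjoint. Summing, `2|G| ≤ (2q+1)ω ≤ 2qk`, so the
total slack `(2q+1)k - 2|G|` is large enough to choose the gaps with `∑ (|Q_v| + g_v) = qk`:
the arcs wind around exactly `q` times and the colouring closes up.
-/

open Finset

def circularArc {k : ℕ} (a : ZMod k) (l : ℕ) : Finset (ZMod k) :=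
  (range l).image fun i : ℕ => a + i

lemma card_circularArc {k l : ℕ} (a : ZMod k) (hl : l ≤ k) : #(circularArc a l) = l := by
  rw [circularArc, card_image_of_injOn, card_range]
  intro i hi j hj hij
  simp only [coe_range, Set.mem_Iio] at hi hj
  exact CharP.natCast_injOn_Iio (ZMod k) k (by simp; omega) (by simp; omega) (add_left_cancel hij)

lemma disjoint_circularArc_add {k l l' s : ℕ} (a : ZMod k) (hl : l ≤ s) (hs : s + l' ≤ k) :
    Disjoint (circularArc a l) (circularArc (a + s) l') := by
  simp only [circularArc, Finset.disjoint_left, mem_image, mem_range, not_exists, not_and]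
  rintro _ ⟨i, hi, rfl⟩ j hj hij
  rw [add_assoc, add_right_inj, ← Nat.cast_add] at hij
  have := CharP.natCast_injOn_Iio (ZMod k) k (by simp; omega) (by simp; omega) hij
  omega

lemma SimpleGraph.cycleGraph_adj_iff_eq_add_one {n : ℕ} [NeZero n] (hn : 2 ≤ n) {u v : Fin n} :
    (cycleGraph n).Adj u v ↔ u = v + 1 ∨ v = u + 1 := by
  have hone : ((1 : Fin n) : ℕ) = 1 := by rw [Fin.val_one', Nat.mod_eq_of_lt hn]
  rw [cycleGraph_adj', ← hone, Fin.val_inj, Fin.val_inj, sub_eq_iff_eq_add', sub_eq_iff_eq_add',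
    add_comm v, add_comm u]

theorem Finset.exists_le_sum_eq_of_le_sum {ι : Type*} (s : Finset ι) (c : ι → ℕ) {B : ℕ}
    (hB : B ≤ ∑ i ∈ s, c i) : ∃ g : ι → ℕ, g ≤ c ∧ ∑ i ∈ s, g i = B := by
  classical
  induction s using Finset.induction generalizing B with
  | empty => exact ⟨0, fun _ => Nat.zero_le _, by simp_all⟩
  | insert a s ha ih =>
    rw [sum_insert ha] at hB
    obtain ⟨g, hgc, hg⟩ := ih (B := B - min B (c a)) (by omega)
    refine ⟨Function.update g a (min B (c a)), fun i => ?_, ?_⟩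
    · rcases eq_or_ne i a with rfl | hia
      · simp
      · simpa [hia] using hgc i
    · rw [sum_insert ha, Function.update_self, sum_update_of_notMem ha, hg]
      omega

theorem Fin.exists_add_one_eq_add_of_sum_eq_zero {n : ℕ} [NeZero n] {M : Type*} [AddCommMonoid M]
    (c : Fin n → M) (hc : ∑ v, c v = 0) : ∃ a : Fin n → M, ∀ v, a (v + 1) = a v + c v := by
  let b : ℕ → M := fun t => ∑ j ∈ range t, c (Fin.ofNat n j)
  refine ⟨fun v => b v, fun v => ?_⟩
  have hstep : b (v + 1) = b v + c v := by simp [b, sum_range_succ]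
  show b (v + 1 : Fin n) = _
  rw [← hstep, Fin.val_add, Fin.val_one', Nat.add_mod_mod]
  rcases (Nat.add_one_le_of_lt v.isLt).lt_or_eq with h | h
  · rw [Nat.mod_eq_of_lt h]
  · rw [h, Nat.mod_self]
    simp only [b, ← hc, range_zero, sum_empty]
    rw [← Fin.sum_univ_eq_sum_range]
    simp

lemma Fin.sum_add_add_one {n : ℕ} [NeZero n] (w : Fin n → ℕ) :
    ∑ v, (w v + w (v + 1)) = 2 * ∑ v, w v := by
  rw [sum_add_distrib, Fintype.sum_equiv (Equiv.addRight 1) (fun v => w (v + 1)) w fun _ => rfl,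
    two_mul]

section CycleArcs

variable {n k : ℕ} [NeZero n]

theorem exists_circularArcs_of_gaps (w g : Fin n → ℕ)
    (hcap : ∀ v, w v + g v + w (v + 1) ≤ k) (hdvd : k ∣ ∑ v, (w v + g v)) :
    ∃ S : Fin n → Finset (ZMod k), (∀ v, #(S v) = w v) ∧ ∀ v, Disjoint (S v) (S (v + 1)) := by
  obtain ⟨a, ha⟩ := Fin.exists_add_one_eq_add_of_sum_eq_zero (fun v => ((w v + g v : ℕ) : ZMod k))
    (by rw [← Nat.cast_sum, ZMod.natCast_eq_zero_iff]; exact hdvd)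
  refine ⟨fun v => circularArc (a v) (w v), fun v => card_circularArc _ ?_, fun v => ?_⟩
  · have := hcap v
    omega
  · change Disjoint (circularArc (a v) (w v)) (circularArc (a (v + 1)) (w (v + 1)))
    rw [ha]
    exact disjoint_circularArc_add _ (Nat.le_add_right _ _) (hcap v)

theorem exists_circularArcs {t : ℕ} (w : Fin n → ℕ) (hpair : ∀ v, w v + w (v + 1) ≤ k)
    (hlow : ∑ v, w v ≤ t * k) (hup : t * k + ∑ v, w v ≤ n * k) :
    ∃ S : Fin n → Finset (ZMod k), (∀ v, #(S v) = w v) ∧ ∀ v, Disjoint (S v) (S (v + 1)) := by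
  have hslack : ∑ v, (k - (w v + w (v + 1))) + 2 * ∑ v, w v = n * k := by
    rw [← Fin.sum_add_add_one, ← sum_add_distrib,
      sum_congr rfl fun v _ => Nat.sub_add_cancel (hpair v)]
    simp
  obtain ⟨g, hg, hgsum⟩ := Finset.exists_le_sum_eq_of_le_sum univ (fun v => k - (w v + w (v + 1)))
    (B := t * k - ∑ v, w v) (by omega)
  refine exists_circularArcs_of_gaps w g (fun v => ?_) ⟨t, ?_⟩
  · have hgv : g v ≤ k - (w v + w (v + 1)) := hg v
    have := hpair v
    omega
  · rw [sum_add_distrib, hgsum, Nat.add_sub_cancel' hlow, mul_comm]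

end CycleArcs

namespace IsCliqueBlowup

variable {α β : Type} [Fintype β] [DecidableEq α] {F : SimpleGraph α} {G : SimpleGraph β}
  {f : β → α}

theorem colorable_of_disjoint_finsets {γ : Type*} [Fintype γ] (hblow : IsCliqueBlowup F G f)
    (S : α → Finset γ) (hcard : ∀ v, #{x | f x = v} ≤ #(S v))
    (hdisj : ∀ u v, F.Adj u v → Disjoint (S u) (S v)) : G.Colorable (Fintype.card γ) := by
  let e : ∀ v, {x // f x = v} ↪ S v := fun v =>
    (Function.Embedding.nonempty_of_card_le (by simpa [Fintype.card_subtype] using hcard v)).some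
  have he_transport : ∀ v w (h : v = w) (x : {x // f x = v}),
      (e v x : γ) = e w ⟨x, x.2.trans h⟩ := by
    rintro v _ rfl x
    rfl
  refine (Coloring.mk (fun x => (e (f x) ⟨x, rfl⟩ : γ)) fun {x y} hxy hcol => ?_).colorable
  obtain ⟨hne, hfib | hadj⟩ := (hblow x y).1 hxy
  · rw [he_transport _ _ hfib ⟨x, rfl⟩, Subtype.val_inj, (e _).apply_eq_iff_eq,
      Subtype.mk.injEq] at hcol
    exact hne hcol
  · exact Finset.disjoint_left.1 (hdisj _ _ hadj) (e (f x) ⟨x, rfl⟩).2 (hcol ▸ (e (f y) ⟨y, rfl⟩).2)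

theorem card_fiber_add_card_fiber_le_cliqueNum (hblow : IsCliqueBlowup F G f) {u v : α}
    (huv : F.Adj u v) : #{x | f x = u} + #{x | f x = v} ≤ G.cliqueNum := by
  classical
  rw [← card_union_of_disjoint (disjoint_filter.2 fun x _ hu hv => huv.ne (hu.symm.trans hv))]
  refine IsClique.card_le_cliqueNum (tc := fun x hx y hy hxy => (hblow x y).2 ⟨hxy, ?_⟩)
  simp only [coe_union, Set.mem_union, mem_coe, mem_filter, mem_univ, true_and] at hx hy
  rcases hx with hx | hx <;> rcases hy with hy | hy <;> simp [hx, hy, huv, huv.symm]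

theorem colorable_of_cycleGraph {n k t : ℕ} [NeZero n] [NeZero k] {f : β → Fin n}
    (hblow : IsCliqueBlowup (cycleGraph n) G f) (hn : 2 ≤ n) (ht : 2 * t ≤ n)
    (hω : n * G.cliqueNum ≤ 2 * t * k) : G.Colorable k := by
  set w : Fin n → ℕ := fun v => #{x | f x = v}
  have hpair : ∀ v, w v + w (v + 1) ≤ G.cliqueNum := fun v =>
    hblow.card_fiber_add_card_fiber_le_cliqueNum
      ((cycleGraph_adj_iff_eq_add_one hn).2 (Or.inr rfl))
  have hsum : 2 * ∑ v, w v ≤ n * G.cliqueNum := by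
    simpa [← Fin.sum_add_add_one, mul_comm] using sum_le_sum fun v (_ : v ∈ univ) => hpair v
  have hωk : G.cliqueNum ≤ k := by
    refine Nat.le_of_mul_le_mul_left (hω.trans ?_) (by omega : 0 < n)
    exact Nat.mul_le_mul_right k ht
  obtain ⟨S, hS, hdisj⟩ := exists_circularArcs (t := t) w (fun v => (hpair v).trans hωk)
    (by nlinarith) (by nlinarith)
  have := hblow.colorable_of_disjoint_finsets S (fun v => (hS v).ge) fun u v huv => by
    rcases (cycleGraph_adj_iff_eq_add_one hn).1 huv with rfl | rfl
    exacts [(hdisj v).symm, hdisj u]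
  rwa [ZMod.card] at this

end IsCliqueBlowup

/-- For `q ≥ 2`, every clique blowup `G` of the cycle `C_{2q+1}` satisfies
`χ(G) ≤ ⌈((2q+1)/(2q))·ω(G)⌉`. -/
theorem chromatic_bound_blowup_odd_cycle (q : ℕ) (hq : 2 ≤ q)
    {β : Type} [Fintype β] (G : SimpleGraph β) (f : β → Fin (2 * q + 1))
    (hblow : IsCliqueBlowup (cycleGraph (2 * q + 1)) G f) :
    G.chromaticNumber ≤
      ((⌈((2 * q + 1 : ℚ)) / (2 * q) * (G.cliqueNum : ℚ)⌉₊ : ℕ) : ℕ∞) := by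
  rcases isEmpty_or_nonempty β with hβ | ⟨⟨x⟩⟩
  · simp [chromaticNumber_eq_zero_of_isEmpty]
  set k := ⌈((2 * q + 1 : ℚ)) / (2 * q) * (G.cliqueNum : ℚ)⌉₊
  have hk : (2 * q + 1) * G.cliqueNum ≤ 2 * q * k := by
    have h : (2 * q + 1 : ℚ) / (2 * q) * G.cliqueNum ≤ k := Nat.le_ceil _
    rw [div_mul_eq_mul_div, div_le_iff₀ (by positivity)] at h
    exact_mod_cast (by linarith : ((2 * q + 1) * G.cliqueNum : ℚ) ≤ 2 * q * k)
  have hω : 1 ≤ G.cliqueNum := by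
    have hx : G.IsClique (({x} : Finset β) : Set β) := by simp
    simpa using IsClique.card_le_cliqueNum (tc := hx)
  have : NeZero k := ⟨by rintro hk0; rw [hk0] at hk; nlinarith⟩
  exact (hblow.colorable_of_cycleGraph (t := q) (by omega) (by omega) hk).chromaticNumber_le
end

section
/- Let p, q be positive integers with p > 2q, let F be a connected triangle-free graph, and let G be a nonempty clique blowup of F with cliques {Q_v : v ∈ V(F)} and ω(G) ≥ 2q+1. Let T ⊆ V(G) be any set with |T ∩ Q_v| = min{q, |Q_v|} for every v ∈ V(F). Let V1 be the union of Q_u ∪ Q_v over all edges uv ∈ E(F) such that min{|Q_u|, |Q_v|} ≤ q−1 and max{|Q_u|, |Q_v|} ≥ ω(G)−q+1, and let V2 = V(G) \ V1. Then: (a) V1 \ T is a disjoint union of pairwise anticomplete cliques of G, each of size at most ω(G)−q−1, so that χ(G[V1 \ T]) ≤ ω(G)−q−1; and (b) there is no edge of G between V1 \ T and V2 \ T. -/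
open SimpleGraph

/-- Let `p, q` be positive integers with `p > 2q`, `F` a connected triangle-free graph and
`G` a nonempty clique blowup of `F` (fibers `Q_v = f⁻¹(v)`) with `ω(G) ≥ 2q+1`.  Let `T`
meet each `Q_v` in exactly `min{q, |Q_v|}` vertices, let `V1` be the union of `Q_u ∪ Q_v`
over all edges `uv` of `F` with `min{|Q_u|,|Q_v|} ≤ q−1` and
`max{|Q_u|,|Q_v|} ≥ ω(G)−q+1`, and let `V2 = V(G) \ V1`.  Then
(a) `V1 \ T` is a disjoint union of pairwise anticomplete cliques of `G`, each of size at
most `ω(G)−q−1`, so that `χ(G[V1 \ T]) ≤ ω(G)−q−1`; and (b) there is no edge of `G`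
between `V1 \ T` and `V2 \ T`. -/
theorem blowup_V1_structure (p q : ℕ) (hp : 0 < p) (hq : 0 < q) (hpq : 2 * q < p)
    {α V : Type} [Fintype α] [Fintype V]
    (F : SimpleGraph α) (hFconn : F.Connected) (hFtf : F.CliqueFree 3)
    (G : SimpleGraph V) (f : V → α)
    (hblow : IsCliqueBlowup F G f) (hne : Function.Surjective f)
    (hω : 2 * q + 1 ≤ G.cliqueNum)
    (T : Set V) (hT : ∀ v : α, (T ∩ f ⁻¹' {v}).ncard = min q (f ⁻¹' {v}).ncard)
    (V1 : Set V)
    (hV1 : V1 = {x | ∃ u v : α, F.Adj u v ∧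
        min (f ⁻¹' {u}).ncard (f ⁻¹' {v}).ncard ≤ q - 1 ∧
        G.cliqueNum - q + 1 ≤ max (f ⁻¹' {u}).ncard (f ⁻¹' {v}).ncard ∧
        (f x = u ∨ f x = v)}) :
    ((∃ 𝒦 : Set (Set V),
        (∀ K ∈ 𝒦, G.IsClique K ∧ K.ncard ≤ G.cliqueNum - q - 1) ∧
        (𝒦.Pairwise Disjoint) ∧
        (𝒦.Pairwise fun K K' => ∀ x ∈ K, ∀ y ∈ K', ¬ G.Adj x y) ∧
        ⋃₀ 𝒦 = V1 \ T) ∧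
      (G.induce (V1 \ T)).chromaticNumber ≤ ((G.cliqueNum - q - 1 : ℕ) : ℕ∞)) ∧
    (∀ x ∈ V1 \ T, ∀ y ∈ (V1ᶜ : Set V) \ T, ¬ G.Adj x y) := by
  classical
  set ω := G.cliqueNum with hωdef
  -- fibers nonempty
  have hQne : ∀ v : α, 1 ≤ (f ⁻¹' {v} : Set V).ncard := by
    intro v
    obtain ⟨x, hx⟩ := hne v
    have hx' : x ∈ (f ⁻¹' {v} : Set V) := hx
    have := (Set.ncard_pos (Set.toFinite _)).2 ⟨x, hx'⟩
    omega
  -- adjacent fibers sum to at most ω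
  have hsum : ∀ u v : α, F.Adj u v →
      (f ⁻¹' {u} : Set V).ncard + (f ⁻¹' {v} : Set V).ncard ≤ ω := by
    intro u v huv
    have hcl : G.IsClique ((f ⁻¹' {u} ∪ f ⁻¹' {v} : Set V)) := by
      intro x hx y hy hxy
      refine (hblow x y).2 ⟨hxy, ?_⟩
      rcases hx with hx | hx <;> rcases hy with hy | hy <;>
        simp only [Set.mem_preimage, Set.mem_singleton_iff] at hx hy
      · exact Or.inl (hx.trans hy.symm)
      · exact Or.inr (by rw [hx, hy]; exact huv)
      · exact Or.inr (by rw [hx, hy]; exact huv.symm)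
      · exact Or.inl (hx.trans hy.symm)
    have hdisj : Disjoint (f ⁻¹' {u} : Set V) (f ⁻¹' {v}) := by
      rw [Set.disjoint_left]
      intro a ha hav
      simp only [Set.mem_preimage, Set.mem_singleton_iff] at ha hav
      exact huv.ne (ha.symm.trans hav)
    have hclf : G.IsClique (((f ⁻¹' {u} ∪ f ⁻¹' {v} : Set V)).toFinset : Set V) := by
      rwa [Set.coe_toFinset]
    have h1 : ((f ⁻¹' {u} ∪ f ⁻¹' {v} : Set V)).toFinset.card ≤ ω :=
      SimpleGraph.IsClique.card_le_cliqueNum (tc := hclf)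
    rw [← Set.ncard_eq_toFinset_card'] at h1
    rwa [Set.ncard_union_eq hdisj] at h1
  -- small fibers are inside T
  have hTsub : ∀ v : α, (f ⁻¹' {v} : Set V).ncard ≤ q → (f ⁻¹' {v} : Set V) ⊆ T := by
    intro v hv
    have h1 : (T ∩ f ⁻¹' {v}).ncard = (f ⁻¹' {v} : Set V).ncard := by
      rw [hT v, min_eq_right hv]
    have h2 : T ∩ f ⁻¹' {v} = f ⁻¹' {v} :=
      Set.eq_of_subset_of_ncard_le Set.inter_subset_right h1.ge (Set.toFinite _)
    intro x hx
    rw [← h2] at hx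
    exact hx.1
  have hnotT : ∀ x : V, x ∉ T → q + 1 ≤ (f ⁻¹' {f x} : Set V).ncard := by
    intro x hx
    by_contra h
    exact hx (hTsub (f x) (by omega) rfl)
  -- big-fiber cardinalities after removing T
  have hTq : ∀ v : α, q ≤ (f ⁻¹' {v} : Set V).ncard →
      ((f ⁻¹' {v} : Set V) \ T).ncard = (f ⁻¹' {v} : Set V).ncard - q := by
    intro v hv
    have h0 : (f ⁻¹' {v} : Set V) \ T = (f ⁻¹' {v} : Set V) \ (T ∩ f ⁻¹' {v}) := by
      ext x; simp only [Set.mem_diff, Set.mem_inter_iff]; tauto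
    rw [h0, Set.ncard_diff Set.inter_subset_right (Set.toFinite _), hT v, min_eq_left hv]
  -- the key predicate
  set Big : α → Prop := fun w => ω - q + 1 ≤ (f ⁻¹' {w} : Set V).ncard ∧
      ∃ u : α, F.Adj u w ∧ (f ⁻¹' {u} : Set V).ncard ≤ q - 1 with hBigdef
  have hbigV1 : ∀ x : V, Big (f x) → x ∈ V1 := by
    intro x ⟨h1, u, hu, hu'⟩
    rw [hV1]
    refine ⟨u, f x, hu, le_trans (min_le_left _ _) hu', le_trans h1 (le_max_right _ _),
      Or.inr rfl⟩
  have hV1big : ∀ x : V, x ∈ V1 → x ∉ T → Big (f x) := by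
    intro x hx hxT
    have hfx := hnotT x hxT
    rw [hV1] at hx
    obtain ⟨u, v, huv, hmin, hmax, hfeq⟩ := hx
    rcases hfeq with hfeq | hfeq
    · rw [hfeq] at hfx
      refine ⟨by rw [hfeq]; omega, v, by rw [hfeq]; exact huv.symm, by omega⟩
    · rw [hfeq] at hfx
      refine ⟨by rw [hfeq]; omega, u, by rw [hfeq]; exact huv, by omega⟩
  -- two big fibers are not adjacent in F
  have hnoadj : ∀ w w' : α, Big w → Big w' → ¬ F.Adj w w' := by
    intro w w' hw hw' hadj
    have := hsum w w' hadj
    have h1 := hw.1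
    have h2 := hw'.1
    omega
  -- size bound for big fibers minus T
  have hcardbig : ∀ w : α, Big w →
      ((f ⁻¹' {w} : Set V) \ T).ncard ≤ ω - q - 1 := by
    intro w ⟨h1, u, hu, hu'⟩
    have h2 := hsum u w hu
    have h3 := hQne u
    have h4 := hTq w (by omega)
    omega
  have hnpos : 0 < ω - q - 1 := by omega
  -- the family of cliques
  refine ⟨⟨⟨(fun w => (f ⁻¹' {w} : Set V) \ T) '' {w | Big w}, ?_, ?_, ?_, ?_⟩, ?_⟩, ?_⟩
  · rintro K ⟨w, hw, rfl⟩
    refine ⟨?_, hcardbig w hw⟩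
    intro x hx y hy hxy
    refine (hblow x y).2 ⟨hxy, Or.inl ?_⟩
    have : f x = w := hx.1
    have : f y = w := hy.1
    simp_all
  · rintro K ⟨w, hw, rfl⟩ K' ⟨w', hw', rfl⟩ hKK'
    have hww' : w ≠ w' := by rintro rfl; exact hKK' rfl
    rw [Set.disjoint_left]
    intro a ha ha'
    exact hww' ((ha.1 : f a = w).symm.trans ha'.1)
  · rintro K ⟨w, hw, rfl⟩ K' ⟨w', hw', rfl⟩ hKK' x hx y hy hadj
    have hww' : w ≠ w' := by rintro rfl; exact hKK' rfl
    rcases (hblow x y).1 hadj with ⟨-, h | h⟩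
    · exact hww' (((hx.1 : f x = w).symm.trans h).trans hy.1)
    · rw [(hx.1 : f x = w), (hy.1 : f y = w')] at h
      exact hnoadj w w' hw hw' h
  · ext x
    simp only [Set.mem_sUnion, Set.mem_image, Set.mem_setOf_eq]
    constructor
    · rintro ⟨K, ⟨w, hw, rfl⟩, hxK⟩
      have hfw : f x = w := hxK.1
      subst hfw
      exact ⟨hbigV1 x hw, hxK.2⟩
    · rintro ⟨hx1, hxT⟩
      exact ⟨(f ⁻¹' {f x} : Set V) \ T, ⟨f x, hV1big x hx1 hxT, rfl⟩, ⟨rfl, hxT⟩⟩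
  · -- chromatic number bound
    have hemb : ∀ w : α, ∃ g : V → Fin (ω - q - 1),
        Big w → Set.InjOn g ((f ⁻¹' {w} : Set V) \ T) := by
      intro w
      by_cases hw : Big w
      · set s : Set V := (f ⁻¹' {w} : Set V) \ T with hs
        have hcard : s.ncard ≤ ω - q - 1 := hcardbig w hw
        have hcard' : Fintype.card s ≤ Fintype.card (Fin (ω - q - 1)) := by
          rw [Fintype.card_fin, ← Nat.card_eq_fintype_card, Nat.card_coe_set_eq]
          exact hcard
        obtain ⟨e⟩ := Function.Embedding.nonempty_of_card_le hcard'
        refine ⟨fun x => if h : x ∈ s then e ⟨x, h⟩ else ⟨0, hnpos⟩, fun _ => ?_⟩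
        intro a ha b hb hab
        simp only [dif_pos ha, dif_pos hb] at hab
        exact Subtype.mk_eq_mk.1 (e.injective hab)
      · exact ⟨fun _ => ⟨0, hnpos⟩, fun h => absurd h hw⟩
    choose g hg using hemb
    have hbig : ∀ x : ↥(V1 \ T), Big (f x.1) := fun x => hV1big x.1 x.2.1 x.2.2
    have hcol : (G.induce (V1 \ T)).Colorable (ω - q - 1) := by
      refine ⟨SimpleGraph.Coloring.mk (fun x => g (f x.1) x.1) ?_⟩
      intro x y hadj
      have hadj' : G.Adj x.1 y.1 := hadj
      obtain ⟨hne', hor⟩ := (hblow x.1 y.1).1 hadj'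
      have hfxy : f x.1 = f y.1 := by
        rcases hor with h | h
        · exact h
        · exact absurd h (hnoadj _ _ (hbig x) (hbig y))
      intro hc
      have hc' : g (f x.1) x.1 = g (f y.1) y.1 := hc
      rw [hfxy] at hc'
      have hxmem : x.1 ∈ (f ⁻¹' {f y.1} : Set V) \ T := ⟨hfxy, x.2.2⟩
      have hymem : y.1 ∈ (f ⁻¹' {f y.1} : Set V) \ T := ⟨rfl, y.2.2⟩
      exact hne' (hg (f y.1) (hbig y) hxmem hymem hc')
    exact hcol.chromaticNumber_le
  · -- part (b)
    intro x hx y hy hadj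
    have hxbig := hV1big x hx.1 hx.2
    obtain ⟨hne', hor⟩ := (hblow x y).1 hadj
    rcases hor with h | h
    · exact hy.1 (hbigV1 y (h ▸ hxbig))
    · -- f x ≠ f y, F.Adj (f x) (f y)
      have hfy := hnotT y hy.2
      by_cases hyq : (f ⁻¹' {f y} : Set V).ncard ≤ q - 1
      · -- then edge (f x, f y) is a bad edge, so y ∈ V1
        refine hy.1 ?_
        rw [hV1]
        exact ⟨f x, f y, h, le_trans (min_le_right _ _) hyq,
          le_trans hxbig.1 (le_max_left _ _), Or.inr rfl⟩
      · have := hsum (f x) (f y) h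
        have h1 := hxbig.1
        omega
end

section
/- Let n ≥ 3 be an odd integer, let P = v_0 v_1 ⋯ v_n be a path, and let Q be a nonempty clique blowup of P with cliques V_0, V_1, …, V_n. Let r ≥ ω(Q) be an integer, let φ be a proper coloring of Q[V_0 ∪ V_n] with colors from {1, …, r}, and let S be a subset of φ(V_0) \ φ(V_n) with |S| ≤ min{|V_{2j}| : 0 ≤ 2j ≤ n}. Then for each odd integer j with 1 ≤ j ≤ n−1, φ extends to a proper r-coloring φ' of Q − V_j such that every color of S is used on some vertex of V_i for every even index i with 0 ≤ i ≤ n. -/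
open SimpleGraph

open Finset in
lemma greedy_color {W : Type} [DecidableEq W] {r : ℕ} (d : W → Fin r)
    (A : Finset W) (F T : Finset (Fin r))
    (hcard : A.card + F.card ≤ r) (hTF : Disjoint T F) (hTA : T.card ≤ A.card) :
    ∃ g : W → Fin r, Set.InjOn g ↑A ∧ (∀ a ∈ A, g a ∉ F) ∧ ↑T ⊆ g '' ↑A := by
  classical
  obtain ⟨A₁, hA₁sub, hA₁card⟩ := Finset.exists_subset_card_eq hTA
  set A₂ : Finset W := A \ A₁ with hA₂def
  set B₂ : Finset (Fin r) := Finset.univ \ (F ∪ T) with hB₂def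
  have hB₂card : B₂.card = r - (F.card + T.card) := by
    rw [hB₂def, Finset.card_sdiff_of_subset (Finset.subset_univ _), Finset.card_univ, Fintype.card_fin,
      Finset.card_union_of_disjoint hTF.symm]
  have hA₂card : A₂.card ≤ B₂.card := by
    rw [hA₂def, Finset.card_sdiff_of_subset hA₁sub, hA₁card, hB₂card]; omega
  obtain ⟨B₂', hB₂'sub, hB₂'card⟩ := Finset.exists_subset_card_eq hA₂card
  have e1 : ↥A₁ ≃ ↥T := Finset.equivOfCardEq hA₁card
  have e2 : ↥A₂ ≃ ↥B₂' := Finset.equivOfCardEq hB₂'card.symm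
  have hB₂'T : ∀ c ∈ B₂', c ∉ T := by
    intro c hc
    have := hB₂'sub hc
    rw [hB₂def, Finset.mem_sdiff, Finset.mem_union] at this
    tauto
  have hB₂'F : ∀ c ∈ B₂', c ∉ F := by
    intro c hc
    have := hB₂'sub hc
    rw [hB₂def, Finset.mem_sdiff, Finset.mem_union] at this
    tauto
  refine ⟨fun x => if h : x ∈ A₁ then (e1 ⟨x, h⟩ : Fin r) else
      if h2 : x ∈ A₂ then (e2 ⟨x, h2⟩ : Fin r) else d x, ?_, ?_, ?_⟩
  · intro x hx y hy hxy
    simp only [Finset.mem_coe] at hx hy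
    dsimp only at hxy
    by_cases h1 : x ∈ A₁ <;> by_cases h2 : y ∈ A₁
    · rw [dif_pos h1, dif_pos h2] at hxy
      have := e1.injective (Subtype.ext hxy)
      exact congrArg Subtype.val this
    · have h2' : y ∈ A₂ := by rw [hA₂def, Finset.mem_sdiff]; exact ⟨hy, h2⟩
      rw [dif_pos h1, dif_neg h2, dif_pos h2'] at hxy
      exact absurd ((e1 ⟨x, h1⟩).2) (by rw [hxy]; exact hB₂'T _ (e2 ⟨y, h2'⟩).2)
    · have h1' : x ∈ A₂ := by rw [hA₂def, Finset.mem_sdiff]; exact ⟨hx, h1⟩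
      rw [dif_neg h1, dif_pos h1', dif_pos h2] at hxy
      exact absurd ((e1 ⟨y, h2⟩).2) (by rw [← hxy]; exact hB₂'T _ (e2 ⟨x, h1'⟩).2)
    · have h1' : x ∈ A₂ := by rw [hA₂def, Finset.mem_sdiff]; exact ⟨hx, h1⟩
      have h2' : y ∈ A₂ := by rw [hA₂def, Finset.mem_sdiff]; exact ⟨hy, h2⟩
      rw [dif_neg h1, dif_pos h1', dif_neg h2, dif_pos h2'] at hxy
      have hval : (e2 ⟨x, h1'⟩ : Fin r) = (e2 ⟨y, h2'⟩ : Fin r) := hxy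
      have := e2.injective (Subtype.ext hval)
      exact congrArg Subtype.val this
  · intro a ha
    dsimp only
    by_cases h1 : a ∈ A₁
    · rw [dif_pos h1]
      exact fun hmem => (Finset.disjoint_left.mp hTF) (e1 ⟨a, h1⟩).2 hmem
    · have h1' : a ∈ A₂ := by rw [hA₂def, Finset.mem_sdiff]; exact ⟨ha, h1⟩
      rw [dif_neg h1, dif_pos h1']
      exact hB₂'F _ (e2 ⟨a, h1'⟩).2
  · intro c hc
    simp only [Finset.mem_coe] at hc
    set a := e1.symm ⟨c, hc⟩ with hadef
    refine ⟨a.1, Finset.mem_coe.mpr (hA₁sub a.2), ?_⟩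
    dsimp only
    rw [dif_pos a.2]
    have : (⟨a.1, a.2⟩ : ↥A₁) = a := rfl
    rw [this, hadef, Equiv.apply_symm_apply]

open Finset in
lemma chain_color {W : Type} [DecidableEq W] {r : ℕ} (V : ℕ → Finset W)
    (T : Finset (Fin r)) (p : ℕ) :
    ∀ (m : ℕ) (g0 : W → Fin r),
    (∀ k l, k ≤ m → l ≤ m → k ≠ l → Disjoint (V k) (V l)) →
    (∀ k, k < m → (V k).card + (V (k+1)).card ≤ r) →
    (∀ k, k ≤ m → Even (k + p) → T.card ≤ (V k).card) →
    Set.InjOn g0 ↑(V 0) →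
    (Even p → ↑T ⊆ g0 '' ↑(V 0)) →
    (¬ Even p → ∀ x ∈ V 0, g0 x ∉ T) →
    ∃ g : W → Fin r,
      (∀ x ∈ V 0, g x = g0 x) ∧
      (∀ k, k ≤ m → Set.InjOn g ↑(V k)) ∧
      (∀ k, k < m → ∀ x ∈ V k, ∀ y ∈ V (k+1), g x ≠ g y) ∧
      (∀ k, k ≤ m → Even (k + p) → ↑T ⊆ g '' ↑(V k)) ∧
      (∀ k, k ≤ m → ¬ Even (k + p) → ∀ x ∈ V k, g x ∉ T) := by
  intro m
  induction m with
  | zero =>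
    intro g0 _ _ _ hinj hb1 hb2
    refine ⟨g0, fun x _ => rfl, ?_, ?_, ?_, ?_⟩
    · intro k hk; rw [Nat.le_zero] at hk; subst hk; exact hinj
    · intro k hk; omega
    · intro k hk hev; rw [Nat.le_zero] at hk; subst hk
      exact hb1 (by simpa using hev)
    · intro k hk hev; rw [Nat.le_zero] at hk; subst hk
      exact hb2 (by simpa using hev)
  | succ m ih =>
    intro g0 hdisj hcard hTcard hinj hb1 hb2
    obtain ⟨g, hg0, hginj, hgcross, hgT, hgT'⟩ :=
      ih g0 (fun k l hk hl => hdisj k l (hk.trans (Nat.le_succ m)) (hl.trans (Nat.le_succ m)))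
        (fun k hk => hcard k (hk.trans (Nat.lt_succ_self m)))
        (fun k hk => hTcard k (hk.trans (Nat.le_succ m))) hinj hb1 hb2
    -- choose the required color set T' for V (m+1)
    obtain ⟨T', hT'eqT, hT'F, hT'card, hT'empty⟩ :
        ∃ T' : Finset (Fin r), (Even (m+1+p) → T' = T) ∧
          Disjoint T' ((V m).image g) ∧ T'.card ≤ (V (m+1)).card ∧
          (¬ Even (m+1+p) → T' = ∅) := by
      by_cases hpar : Even (m + 1 + p)
      · have hodd : ¬ Even (m + p) := by
          simp only [Nat.even_iff] at hpar ⊢; omega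
        refine ⟨T, fun _ => rfl, ?_, hTcard (m+1) le_rfl hpar, fun h => absurd hpar h⟩
        rw [Finset.disjoint_left]
        intro c hc hcim
        obtain ⟨x, hx, hgx⟩ := Finset.mem_image.mp hcim
        exact hgT' m le_rfl hodd x hx (hgx ▸ hc)
      · exact ⟨∅, fun h => absurd h hpar, Finset.disjoint_empty_left _, by simp, fun _ => rfl⟩
    have hcard' : (V (m+1)).card + ((V m).image g).card ≤ r := by
      have := Finset.card_image_le (s := V m) (f := g)
      have h2 := hcard m (Nat.lt_succ_self m)
      omega
    obtain ⟨h, hhinj, hhF, hhT⟩ := greedy_color g (V (m+1)) ((V m).image g) T'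
      hcard' hT'F.symm.symm hT'card
    set g' : W → Fin r := fun x => if x ∈ V (m+1) then h x else g x with hg'def
    have hnotmem : ∀ k, k ≤ m → ∀ x ∈ V k, x ∉ V (m+1) := by
      intro k hk x hx
      exact Finset.disjoint_left.mp
        (hdisj k (m+1) (hk.trans (Nat.le_succ m)) le_rfl (by omega)) hx
    have hg'g : ∀ k, k ≤ m → ∀ x ∈ V k, g' x = g x := by
      intro k hk x hx
      simp only [hg'def, if_neg (hnotmem k hk x hx)]
    have hg'h : ∀ x ∈ V (m+1), g' x = h x := by
      intro x hx; simp only [hg'def, if_pos hx]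
    refine ⟨g', ?_, ?_, ?_, ?_, ?_⟩
    · intro x hx
      rw [hg'g 0 (Nat.zero_le m) x hx]; exact hg0 x hx
    · intro k hk
      rcases Nat.lt_succ_iff_lt_or_eq.mp (Nat.lt_succ_of_le hk) with hk' | hk'
      · have hk2 : k ≤ m := by omega
        intro x hx y hy hxy
        rw [hg'g k hk2 x hx, hg'g k hk2 y hy] at hxy
        exact hginj k hk2 hx hy hxy
      · subst hk'
        intro x hx y hy hxy
        rw [hg'h x hx, hg'h y hy] at hxy
        exact hhinj hx hy hxy
    · intro k hk x hx y hy
      rcases Nat.lt_succ_iff_lt_or_eq.mp hk with hk' | hk'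
      · have hx' := hg'g k (by omega) x hx
        have hy' := hg'g (k+1) (by omega) y hy
        rw [hx', hy']
        exact hgcross k hk' x hx y hy
      · subst hk'
        rw [hg'g k le_rfl x hx, hg'h y hy]
        intro heq
        exact hhF y hy (heq ▸ Finset.mem_image_of_mem g hx)
    · intro k hk hev
      rcases Nat.lt_succ_iff_lt_or_eq.mp (Nat.lt_succ_of_le hk) with hk' | hk'
      · have hk2 : k ≤ m := by omega
        intro c hc
        obtain ⟨x, hx, hgx⟩ := hgT k hk2 hev hc
        exact ⟨x, hx, by rw [hg'g k hk2 x hx]; exact hgx⟩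
      · subst hk'
        intro c hc
        obtain ⟨x, hx, hgx⟩ := hhT (by rw [hT'eqT hev]; exact hc)
        exact ⟨x, hx, by rw [hg'h x hx]; exact hgx⟩
    · intro k hk hev x hx
      rcases Nat.lt_succ_iff_lt_or_eq.mp (Nat.lt_succ_of_le hk) with hk' | hk'
      · have hk2 : k ≤ m := by omega
        rw [hg'g k hk2 x hx]
        exact hgT' k hk2 hev x hx
      · subst hk'
        rw [hg'h x hx]
        intro hmem
        have hevm : Even (m + p) := by
          simp only [Nat.even_iff] at hev ⊢; omega
        have hsub : ↑T ⊆ g '' ↑(V m) := hgT m le_rfl hevm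
        have : h x ∈ (V m).image g := by
          obtain ⟨y, hy, hgy⟩ := hsub hmem
          exact Finset.mem_image.mpr ⟨y, hy, hgy⟩
        exact hhF x hx this

/-- Path extension.  Let `n ≥ 3` be odd, let `Q` be a nonempty clique blowup of the path
`v_0 v_1 ⋯ v_n` with cliques `V_i = f⁻¹(i)`, let `r ≥ ω(Q)`, let `φ` be a proper coloring
of `Q[V_0 ∪ V_n]` with `r` colors, and let `S ⊆ φ(V_0) \ φ(V_n)` with
`|S| ≤ min{|V_{2j}|}`.  Then for each odd `j` with `1 ≤ j ≤ n−1`, `φ` extends to a proper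
`r`-coloring `φ'` of `Q − V_j` using every color of `S` on every `V_i` with `i` even. -/
theorem path_extension (n : ℕ) (hn3 : 3 ≤ n) (hnodd : Odd n)
    {W : Type} [Fintype W] (Q : SimpleGraph W) (f : W → Fin (n + 1))
    (hblow : IsCliqueBlowup (pathGraph (n + 1)) Q f) (hne : Function.Surjective f)
    (r : ℕ) (hr : Q.cliqueNum ≤ r)
    (φ : W → Fin r)
    (hφ : ∀ x y : W, (f x = 0 ∨ f x = Fin.last n) → (f y = 0 ∨ f y = Fin.last n) →
      Q.Adj x y → φ x ≠ φ y)
    (S : Set (Fin r))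
    (hS : S ⊆ (φ '' (f ⁻¹' {0})) \ (φ '' (f ⁻¹' {Fin.last n})))
    (hScard : ∀ i : Fin (n + 1), Even i.val → S.ncard ≤ (f ⁻¹' {i}).ncard)
    (j : Fin (n + 1)) (hjodd : Odd j.val) (hjle : j.val ≤ n - 1) :
    ∃ φ' : W → Fin r,
      (∀ x : W, (f x = 0 ∨ f x = Fin.last n) → φ' x = φ x) ∧
      (∀ x y : W, f x ≠ j → f y ≠ j → Q.Adj x y → φ' x ≠ φ' y) ∧
      (∀ c ∈ S, ∀ i : Fin (n + 1), Even i.val → ∃ x : W, f x = i ∧ φ' x = c) := by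
  classical
  have hjoddn : j.val % 2 = 1 := Nat.odd_iff.mp hjodd
  have hnoddn : n % 2 = 1 := Nat.odd_iff.mp hnodd
  have hj1 : 1 ≤ j.val := by omega
  have hjn : j.val < n := by omega
  set fib : ℕ → Finset W := fun k => Finset.univ.filter (fun w => (f w).val = k) with hfibdef
  have hfibmem : ∀ (w : W) (k : ℕ), w ∈ fib k ↔ (f w).val = k := by
    intro w k; simp [hfibdef]
  have hfibdisj : ∀ k l, k ≠ l → Disjoint (fib k) (fib l) := by
    intro k l hkl
    rw [Finset.disjoint_left]
    intro w hw hw'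
    rw [hfibmem] at hw hw'
    omega
  have hfibcoe : ∀ i : Fin (n+1), f ⁻¹' {i} = ↑(fib i.val) := by
    intro i; ext w
    simp [hfibdef, Fin.ext_iff]
  -- the union of consecutive fibers is a clique
  have hcliquecard : ∀ k, k + 1 ≤ n → (fib k).card + (fib (k+1)).card ≤ r := by
    intro k hk
    have hdisj := hfibdisj k (k+1) (by omega)
    have hclique : Q.IsClique ↑(fib k ∪ fib (k+1)) := by
      intro x hx y hy hxy
      rw [hblow]
      refine ⟨hxy, ?_⟩
      simp only [Finset.coe_union, Set.mem_union, Finset.mem_coe, hfibmem] at hx hy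
      by_cases heq : f x = f y
      · exact Or.inl heq
      · right
        have hvne : (f x).val ≠ (f y).val := fun h => heq (Fin.ext h)
        rw [SimpleGraph.pathGraph_adj]
        omega
    have h1 : (fib k ∪ fib (k+1)).card ≤ Q.cliqueNum :=
      SimpleGraph.IsClique.card_le_cliqueNum (tc := hclique)
    rw [Finset.card_union_of_disjoint hdisj] at h1
    omega
  -- φ is injective on the end fibers
  have hinj0 : Set.InjOn φ ↑(fib 0) := by
    intro x hx y hy hxy
    by_contra hne2
    rw [Finset.mem_coe, hfibmem] at hx hy
    have hf0 : f x = 0 := Fin.ext (by simpa using hx)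
    have hf0' : f y = 0 := Fin.ext (by simpa using hy)
    exact hφ x y (Or.inl hf0) (Or.inl hf0')
      ((hblow x y).mpr ⟨hne2, Or.inl (by rw [hf0, hf0'])⟩) hxy
  have hinjn : Set.InjOn φ ↑(fib n) := by
    intro x hx y hy hxy
    by_contra hne2
    rw [Finset.mem_coe, hfibmem] at hx hy
    have hfn : f x = Fin.last n := Fin.ext (by simpa using hx)
    have hfn' : f y = Fin.last n := Fin.ext (by simpa using hy)
    exact hφ x y (Or.inr hfn) (Or.inr hfn')
      ((hblow x y).mpr ⟨hne2, Or.inl (by rw [hfn, hfn'])⟩) hxy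
  -- the finset of special colors
  have hSfin : S.Finite := S.toFinite
  set Tfin : Finset (Fin r) := hSfin.toFinset with hTdef
  have hTmem : ∀ c, c ∈ Tfin ↔ c ∈ S := fun c => hSfin.mem_toFinset
  have hTcoe : (↑Tfin : Set (Fin r)) = S := hSfin.coe_toFinset
  have hTcard : ∀ k, k ≤ n → Even k → Tfin.card ≤ (fib k).card := by
    intro k hk hev
    have h1 := hScard ⟨k, by omega⟩ hev
    rw [hfibcoe ⟨k, by omega⟩, Set.ncard_coe_finset] at h1
    have h1' : S.ncard ≤ (fib k).card := h1
    have h2 : S.ncard = Tfin.card := Set.ncard_eq_toFinset_card S hSfin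
    omega
  -- left chain: fibers 0 .. j-1
  obtain ⟨gL, hL0, hLinj, hLcross, hLT, hLT'⟩ := chain_color fib Tfin 0 (j.val - 1) φ
    (fun k l _ _ hkl => hfibdisj k l hkl)
    (fun k hk => hcliquecard k (by omega))
    (fun k hk hev => hTcard k (by omega) (by simpa using hev))
    hinj0
    (fun _ => by
      rw [hTcoe]
      intro c hc
      have h1 := (hS hc).1
      rwa [hfibcoe 0] at h1)
    (fun h => absurd Even.zero h)
  -- right chain: fibers n, n-1, .., j+1  (V' k = fib (n - k))
  obtain ⟨gR, hR0, hRinj, hRcross, hRT, hRT'⟩ :=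
    chain_color (fun k => fib (n - k)) Tfin 1 (n - 1 - j.val) φ
    (fun k l hk hl hkl => hfibdisj (n-k) (n-l) (by omega))
    (fun k hk => by
      have h1 : n - k = (n - (k+1)) + 1 := by omega
      have h2 := hcliquecard (n - (k+1)) (by omega)
      rw [h1]
      omega)
    (fun k hk hev => hTcard (n-k) (by omega)
      (by rw [Nat.even_iff] at hev ⊢; omega))
    (by simpa using hinjn)
    (fun h => absurd h (by decide))
    (fun _ x hx hmem => by
      simp only [Finset.mem_coe, hfibmem] at hx
      have hfx : f x = Fin.last n := Fin.ext (by simpa using hx)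
      exact (hS ((hTmem _).mp hmem)).2 ⟨x, by simp [hfx], rfl⟩)
  -- the combined coloring
  set φ' : W → Fin r := fun x =>
    if (f x).val < j.val then gL x else if j.val < (f x).val then gR x else φ x with hφ'def
  have hφ'L : ∀ x, (f x).val < j.val → φ' x = gL x := by
    intro x hx; simp only [hφ'def]; rw [if_pos hx]
  have hφ'R : ∀ x, j.val < (f x).val → φ' x = gR x := by
    intro x hx; simp only [hφ'def]; rw [if_neg (by omega), if_pos hx]
  refine ⟨φ', ?_, ?_, ?_⟩
  · -- extends φ on the end fibers
    rintro x (hx | hx)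
    · have hv : (f x).val = 0 := by rw [hx]; rfl
      rw [hφ'L x (by omega)]
      exact hL0 x ((hfibmem x 0).mpr hv)
    · have hv : (f x).val = n := by rw [hx]; exact Fin.val_last n
      rw [hφ'R x (by omega)]
      refine hR0 x ?_
      simp only [hfibmem]
      omega
  · -- properness away from fiber j
    intro x y hxj hyj hadj
    rw [hblow] at hadj
    obtain ⟨hne2, hor⟩ := hadj
    have haj : (f x).val ≠ j.val := fun h => hxj (Fin.ext h)
    have hbj : (f y).val ≠ j.val := fun h => hyj (Fin.ext h)
    have hxn : (f x).val ≤ n := (f x).is_le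
    have hyn : (f y).val ≤ n := (f y).is_le
    have key : ∀ u v : W, (f u).val ≠ j.val → (f v).val ≠ j.val →
        (f u).val + 1 = (f v).val → φ' u ≠ φ' v := by
      intro u v huj hvj hstep
      have hun : (f u).val ≤ n := (f u).is_le
      have hvn : (f v).val ≤ n := (f v).is_le
      by_cases hcase : (f v).val < j.val
      · rw [hφ'L u (by omega), hφ'L v hcase]
        exact hLcross (f u).val (by omega) u (by rw [hfibmem]) v (by rw [hfibmem]; omega)
      · have hu' : j.val < (f u).val := by omega
        have hv' : j.val < (f v).val := by omega
        rw [hφ'R u hu', hφ'R v hv']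
        intro heq
        refine hRcross (n - (f v).val) (by omega) v ?_ u ?_ heq.symm
        · simp only [hfibmem]; omega
        · simp only [hfibmem]; omega
    rcases hor with heq | hpadj
    · have hvv : (f x).val = (f y).val := by rw [heq]
      by_cases hcase : (f x).val < j.val
      · rw [hφ'L x hcase, hφ'L y (by omega)]
        intro hcc
        refine hne2 (hLinj (f x).val (by omega) ?_ ?_ hcc)
        · simp only [Finset.mem_coe, hfibmem]
        · simp only [Finset.mem_coe, hfibmem]; omega
      · have hx' : j.val < (f x).val := by omega
        rw [hφ'R x hx', hφ'R y (by omega)]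
        intro hcc
        refine hne2 (hRinj (n - (f x).val) (by omega) ?_ ?_ hcc)
        · simp only [Finset.mem_coe, hfibmem]; omega
        · simp only [Finset.mem_coe, hfibmem]; omega
    · rw [SimpleGraph.pathGraph_adj] at hpadj
      rcases hpadj with hstep | hstep
      · exact key x y haj hbj hstep
      · exact fun h => (key y x hbj haj hstep) h.symm
  · -- colors of S appear on every even fiber
    intro c hc i hev
    have hevn : i.val % 2 = 0 := Nat.even_iff.mp hev
    have hin : i.val ≤ n := i.is_le
    by_cases hcase : i.val < j.val
    · have hmem : (↑Tfin : Set (Fin r)) ⊆ gL '' ↑(fib i.val) :=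
        hLT i.val (by omega) (by simpa using hev)
      obtain ⟨x, hx, hgx⟩ := hmem (by rw [hTcoe]; exact hc)
      simp only [Finset.mem_coe, hfibmem] at hx
      refine ⟨x, Fin.ext (by simpa using hx), ?_⟩
      rw [hφ'L x (by omega)]
      exact hgx
    · have hi' : j.val < i.val := by omega
      have hmem : (↑Tfin : Set (Fin r)) ⊆ gR '' ↑(fib (n - (n - i.val))) :=
        hRT (n - i.val) (by omega) (by rw [Nat.even_iff]; omega)
      obtain ⟨x, hx, hgx⟩ := hmem (by rw [hTcoe]; exact hc)
      simp only [Finset.mem_coe, hfibmem] at hx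
      have hx' : (f x).val = i.val := by omega
      refine ⟨x, Fin.ext (by simpa using hx'), ?_⟩
      rw [hφ'R x (by omega)]
      exact hgx
end
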